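/- For all x ∈ M, ‖Log_𝟙(x)‖₂ ≤ (π/2)·√(1 + x₂² + x₃²), where Log_𝟙(x) = (1/sinc(φ(x)))[x₁,x₂,x₃]ᵀ with φ(x) ∈ (-π/2, π/2]. -/

import Mathlib

open Real

/-- Four-quadrant arctangent: `arctan2 y x ∈ (-π, π]` is the argument of `x + y i`. -/
noncomputable def arctan2 (y x : ℝ) : ℝ := Complex.arg (Complex.mk x y)

/-- The angle-wrapping function mapping into `(-π/2, π/2]`. -/
noncomputable def wrap (α : ℝ) : ℝ :=
  if α ≤ -(π / 2) then α + π
  else if α > π / 2 then α - π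
  else α

/-- `sinc t = sin t / t`, with `sinc 0 = 1`. -/
noncomputable def sinc (t : ℝ) : ℝ := if t = 0 then 1 else Real.sin t / t

/-- The rotation half-angle of a PUDQ. -/
noncomputable def phi (x : Fin 4 → ℝ) : ℝ := wrap (arctan2 (x 1) (x 0))

/-- The logarithm map at the identity, `Log_𝟙 : M → ℝ³`. -/
noncomputable def Log1 (x : Fin 4 → ℝ) : Fin 3 → ℝ :=
  fun i => (1 / _root_.sinc (phi x)) * ![x 1, x 2, x 3] i

/-! The angle `φ(x)` lies in `[-π/2, π/2]`, where Jordan's inequality `sin t ≥ (2/π) t` gives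
`sinc φ ≥ 2/π`; hence every coordinate of `Log_𝟙(x)` is at most `π/2` times the corresponding
coordinate of `(x₁, x₂, x₃)`, and `x₁² ≤ 1` on `M`. -/

lemma abs_wrap_le {α : ℝ} (h₁ : -(3 * π / 2) ≤ α) (h₂ : α ≤ 3 * π / 2) : |wrap α| ≤ π / 2 := by
  unfold wrap
  rw [abs_le]
  split_ifs <;> constructor <;> linarith

lemma abs_phi_le (x : Fin 4 → ℝ) : |phi x| ≤ π / 2 :=
  have h₁ : -π < arctan2 (x 1) (x 0) := Complex.neg_pi_lt_arg _
  have h₂ : arctan2 (x 1) (x 0) ≤ π := Complex.arg_le_pi _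
  abs_wrap_le (by linarith [pi_pos]) (by linarith [pi_pos])

lemma Real.two_div_pi_le_sinc {t : ℝ} (ht : |t| ≤ π / 2) : 2 / π ≤ Real.sinc t := by
  wlog h₀ : 0 < t generalizing t
  · rcases (not_lt.1 h₀).eq_or_lt with rfl | hneg
    · simpa using (div_le_one pi_pos).2 (by linarith [pi_gt_three])
    · simpa using this (by rwa [abs_neg]) (neg_pos.2 hneg)
  rw [sinc_of_ne_zero h₀.ne', le_div_iff₀ h₀]
  exact mul_le_sin h₀.le (by rwa [abs_of_pos h₀] at ht)

lemma sinc_eq_real_sinc : _root_.sinc = Real.sinc := rfl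

lemma abs_one_div_sinc_le {t : ℝ} (ht : |t| ≤ π / 2) : |1 / _root_.sinc t| ≤ π / 2 := by
  have hs : 2 / π ≤ _root_.sinc t := sinc_eq_real_sinc ▸ Real.two_div_pi_le_sinc ht
  have hs₀ : 0 < _root_.sinc t := lt_of_lt_of_le (by positivity) hs
  rw [abs_of_pos (one_div_pos.2 hs₀), one_div, ← inv_div]
  exact inv_anti₀ (by positivity) hs

lemma sum_sq_log1 (x : Fin 4 → ℝ) :
    ∑ i, Log1 x i ^ 2 = (1 / _root_.sinc (phi x)) ^ 2 * (x 1 ^ 2 + x 2 ^ 2 + x 3 ^ 2) := by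
  simp only [Log1, Fin.sum_univ_three, mul_pow, Matrix.cons_val]
  ring

theorem norm_log_le (x : Fin 4 → ℝ) (hx : x 0 ^ 2 + x 1 ^ 2 = 1) :
    Real.sqrt (∑ i, Log1 x i ^ 2) ≤ (π / 2) * Real.sqrt (1 + x 2 ^ 2 + x 3 ^ 2) := by
  have hc : |1 / _root_.sinc (phi x)| ≤ π / 2 := abs_one_div_sinc_le (abs_phi_le x)
  have hx₁ : x 1 ^ 2 ≤ 1 := by linarith [sq_nonneg (x 0)]
  rw [sum_sq_log1, sqrt_mul (sq_nonneg _), sqrt_sq_eq_abs]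
  gcongr
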